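/- Let p be a prime and e ≥ 1. In the polynomial ring (ℤ/p^{e+1}ℤ)[x,y], let I be the ideal generated by the elements p^{e−n}·F_n(x,y) for 0 ≤ n ≤ e together with y^{p^e} (where the coefficients of F_n are reduced modulo p^{e+1}). Then x^{p^e+p^{e−1}−1} ∉ I. -/
import Mathlib


open MvPolynomial

/-- The polynomials `F_n ∈ ℤ[s,t]` (with `s = X 0`, `t = X 1`), defined recursively by
`F_0(s,t) = s` and `F_n(s,t) = F_{n-1}(s,t)^p - p · F_{n-1}(t,0)`. -/
noncomputable def F (p : ℕ) : ℕ → MvPolynomial (Fin 2) ℤ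
  | 0 => X 0
  | n + 1 => F p n ^ p - (p : MvPolynomial (Fin 2) ℤ) * (aeval ![X 1, 0] (F p n))

/-- Binomial: `(u + p·E)^p = u^p + p²·Q` in any commutative ring. -/
lemma aux_binom {R : Type*} [CommRing R] (p : ℕ) (u E : R) :
    ∃ Q : R, (u + p * E) ^ p = u ^ p + p ^ 2 * Q := by
  suffices h : (p : R) ^ 2 ∣ (u + p * E) ^ p - u ^ p by
    obtain ⟨Q, hQ⟩ := h
    exact ⟨Q, by linear_combination hQ⟩
  rcases Nat.eq_zero_or_pos p with hp | hp
  · subst hp; simp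
  rw [add_pow, Finset.sum_range_succ]
  simp only [Nat.choose_self, Nat.cast_one, mul_one, Nat.sub_self, pow_zero]
  rw [add_sub_cancel_right]
  apply Finset.dvd_sum
  intro k hk
  rw [Finset.mem_range] at hk
  by_cases hk1 : k = p - 1
  · have h1 : p - k = 1 := by omega
    have h2 : (p.choose k : R) = (p : R) := by
      have hsym := Nat.choose_symm (n := p) (k := 1) hp
      rw [Nat.choose_one_right] at hsym
      rw [hk1, hsym]
    rw [h1, pow_one, h2]
    exact ⟨u ^ k * E, by ring⟩
  · have h2 : 2 ≤ p - k := by omega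
    have hdvd : ((p : R)) ^ 2 ∣ (↑p * E) ^ (p - k) := by
      rw [mul_pow]
      exact Dvd.dvd.mul_right (pow_dvd_pow _ h2) _
    exact Dvd.dvd.mul_right (Dvd.dvd.mul_left hdvd _) _

/-- `F_{n+1} = x^{p^{n+1}} - p·y^{p^n} + p²·D`. -/
lemma F_succ_eq (p : ℕ) (hp : 0 < p) (n : ℕ) :
    ∃ D : MvPolynomial (Fin 2) ℤ,
      F p (n + 1) = X 0 ^ p ^ (n + 1) - (p : MvPolynomial (Fin 2) ℤ) * X 1 ^ p ^ n +
        (p : MvPolynomial (Fin 2) ℤ) ^ 2 * D := by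
  induction n with
  | zero =>
    refine ⟨0, ?_⟩
    show (X 0 : MvPolynomial (Fin 2) ℤ) ^ p - _ * (aeval ![X 1, 0] (X 0)) = _
    rw [aeval_X]
    simp only [Matrix.cons_val_zero, pow_one, pow_zero]
    ring
  | succ n ih =>
    obtain ⟨D, hD⟩ := ih
    obtain ⟨Q, hQ⟩ := aux_binom p (X 0 ^ p ^ (n + 1) : MvPolynomial (Fin 2) ℤ)
      (-(X 1 ^ p ^ n) + (p : MvPolynomial (Fin 2) ℤ) * D)
    have h1 : F p (n + 2) = F p (n + 1) ^ p -
        (p : MvPolynomial (Fin 2) ℤ) * (aeval ![X 1, 0] (F p (n + 1))) := rfl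
    have h3 : F p (n + 1) ^ p = X 0 ^ p ^ (n + 2) + (p : MvPolynomial (Fin 2) ℤ) ^ 2 * Q := by
      have hrw : F p (n + 1) =
          X 0 ^ p ^ (n + 1) + (p : MvPolynomial (Fin 2) ℤ) *
            (-(X 1 ^ p ^ n) + (p : MvPolynomial (Fin 2) ℤ) * D) := by
        rw [hD]; ring
      rw [hrw, hQ, ← pow_mul, ← pow_succ]
    have h2 : aeval ![X 1, 0] (F p (n + 1)) =
        X 1 ^ p ^ (n + 1) + (p : MvPolynomial (Fin 2) ℤ) ^ 2 * (aeval ![X 1, 0] D) := by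
      rw [hD]
      rw [map_add, map_sub, map_mul, map_mul, map_pow, map_pow, map_pow, aeval_X, aeval_X]
      simp only [Matrix.cons_val_zero, Matrix.cons_val_one, Matrix.head_cons, map_natCast]
      rw [zero_pow (by positivity : p ^ n ≠ 0)]
      ring
    refine ⟨Q - (p : MvPolynomial (Fin 2) ℤ) * (aeval ![X 1, 0] D), ?_⟩
    rw [h1, h3, h2]
    ring

/-- `F_n = x^{p^n} + p·C`. -/
lemma F_eq (p : ℕ) (hp : 0 < p) (n : ℕ) :
    ∃ C : MvPolynomial (Fin 2) ℤ,
      F p n = X 0 ^ p ^ n + (p : MvPolynomial (Fin 2) ℤ) * C := by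
  cases n with
  | zero => exact ⟨0, by show (X 0 : MvPolynomial (Fin 2) ℤ) = _; simp⟩
  | succ n =>
    obtain ⟨D, hD⟩ := F_succ_eq p hp n
    exact ⟨-(X 1 ^ p ^ n) + (p : MvPolynomial (Fin 2) ℤ) * D, by rw [hD]; ring⟩

/-- In `(ℤ/p^{e+1}ℤ)[x,y]`, let `I` be the ideal generated by the `p^{e-n}·F_n(x,y)`
for `0 ≤ n ≤ e` together with `y^{p^e}` (coefficients of `F_n` reduced mod `p^{e+1}`).
Then `x^{p^e+p^{e-1}-1} ∉ I`. -/
theorem x_pow_not_mem_mod_p_pow (p : ℕ) (hp : p.Prime) (e : ℕ) (he : 1 ≤ e)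
    (I : Ideal (MvPolynomial (Fin 2) (ZMod (p ^ (e + 1)))))
    (hI : I = Ideal.span
      ((Set.range fun n : Fin (e + 1) =>
          (p : MvPolynomial (Fin 2) (ZMod (p ^ (e + 1)))) ^ (e - (n : ℕ)) *
            MvPolynomial.map (Int.castRingHom (ZMod (p ^ (e + 1)))) (F p n)) ∪
        {X 1 ^ p ^ e})) :
    (X 0 : MvPolynomial (Fin 2) (ZMod (p ^ (e + 1)))) ^ (p ^ e + p ^ (e - 1) - 1) ∉ I := by
  classical
  set R := ZMod (p ^ (e + 1)) with hR
  have hp1 : 1 < p := hp.one_lt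
  have hpe1 : 1 ≤ p ^ (e - 1) := Nat.one_le_pow _ _ hp.pos
  have hpe : 1 ≤ p ^ e := Nat.one_le_pow _ _ hp.pos
  have hpee : p ^ (e - 1) < p ^ e := Nat.pow_lt_pow_right hp1 (by omega)
  -- the two monomials of the functional
  set m0 : Fin 2 →₀ ℕ := Finsupp.single 0 (p ^ (e - 1) - 1 + p ^ e) with hm0
  set m1 : Fin 2 →₀ ℕ :=
    Finsupp.single 0 (p ^ (e - 1) - 1) + Finsupp.single 1 (p ^ (e - 1)) with hm1
  set L : MvPolynomial (Fin 2) R → R :=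
    fun f => (p : R) ^ e * coeff m0 f + (p : R) ^ (e - 1) * coeff m1 f with hLdef
  have hm1at0 : m1 0 = p ^ (e - 1) - 1 := by
    rw [hm1, Finsupp.add_apply, Finsupp.single_eq_same,
      Finsupp.single_eq_of_ne (by decide), add_zero]
  have hm0at1 : m0 1 = 0 := by
    rw [hm0, Finsupp.single_eq_of_ne (by decide)]
  have hm1at1 : m1 1 = p ^ (e - 1) := by
    rw [hm1, Finsupp.add_apply, Finsupp.single_eq_of_ne (by decide),
      Finsupp.single_eq_same, zero_add]
  have hzero : (p : R) ^ (e + 1) = 0 := by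
    have h := ZMod.natCast_self (p ^ (e + 1))
    push_cast at h
    exact h
  have hLadd : ∀ f g : MvPolynomial (Fin 2) R, L (f + g) = L f + L g := by
    intro f g; simp only [hLdef, coeff_add]; ring
  have hLCmul : ∀ (r : R) (f : MvPolynomial (Fin 2) R), L (C r * f) = r * L f := by
    intro r f; simp only [hLdef, coeff_C_mul]; ring
  have hLfac : ∀ f : MvPolynomial (Fin 2) R, ∃ a : R, L f = (p : R) ^ (e - 1) * a := by
    intro f
    refine ⟨(p : R) * coeff m0 f + coeff m1 f, ?_⟩
    have hpe' : (p : R) ^ e = (p : R) ^ (e - 1) * p := by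
      rw [← pow_succ]; congr 1; omega
    simp only [hLdef, hpe']; ring
  have hCp : ((p : ℕ) : MvPolynomial (Fin 2) R) = C ((p : ℕ) : R) :=
    (map_natCast (C : R →+* MvPolynomial (Fin 2) R) p).symm
  have hbig : ∀ m : ℕ, e + 1 ≤ m → (p : R) ^ m = 0 := by
    intro m hm
    calc (p : R) ^ m = (p : R) ^ (e + 1) * (p : R) ^ (m - (e + 1)) := by
          rw [← pow_add]; congr 1; omega
      _ = 0 := by rw [hzero, zero_mul]
  have hp2L : ∀ f : MvPolynomial (Fin 2) R, (p : R) ^ 2 * L f = 0 := by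
    intro f
    obtain ⟨a, ha⟩ := hLfac f
    rw [ha, ← mul_assoc, ← pow_add, hbig _ (by omega), zero_mul]
  -- coefficient computations
  have hcXm1 : ∀ (g : MvPolynomial (Fin 2) R) (t : ℕ), p ^ (e - 1) ≤ t →
      coeff m1 (g * X 0 ^ t) = 0 := by
    intro g t ht
    rw [X_pow_eq_monomial, coeff_mul_monomial', if_neg]
    rw [Finsupp.single_le_iff, hm1at0]
    omega
  have hcXm0 : ∀ g : MvPolynomial (Fin 2) R,
      coeff m0 (g * X 0 ^ p ^ e) = coeff (Finsupp.single 0 (p ^ (e - 1) - 1)) g := by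
    intro g
    rw [X_pow_eq_monomial, coeff_mul_monomial', if_pos, mul_one]
    · congr 1
      rw [hm0, Finsupp.single_add, add_tsub_cancel_right]
    · rw [Finsupp.single_le_iff, hm0, Finsupp.single_eq_same]
      omega
  have hcYm0 : ∀ (g : MvPolynomial (Fin 2) R) (t : ℕ), 1 ≤ t →
      coeff m0 (g * X 1 ^ t) = 0 := by
    intro g t ht
    rw [X_pow_eq_monomial, coeff_mul_monomial', if_neg]
    rw [Finsupp.single_le_iff, hm0at1]
    omega
  have hcYm1 : ∀ g : MvPolynomial (Fin 2) R,
      coeff m1 (g * X 1 ^ p ^ (e - 1)) = coeff (Finsupp.single 0 (p ^ (e - 1) - 1)) g := by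
    intro g
    rw [X_pow_eq_monomial, coeff_mul_monomial', if_pos, mul_one]
    · congr 1
      rw [hm1, add_tsub_cancel_right]
    · rw [hm1]
      exact le_add_self
  have hcYm1' : ∀ (g : MvPolynomial (Fin 2) R) (t : ℕ), p ^ (e - 1) < t →
      coeff m1 (g * X 1 ^ t) = 0 := by
    intro g t ht
    rw [X_pow_eq_monomial, coeff_mul_monomial', if_neg]
    rw [Finsupp.single_le_iff, hm1at1]
    omega
  -- the ideal of polynomials killed by L after arbitrary multiplication
  set K : Ideal (MvPolynomial (Fin 2) R) :=
    { carrier := {f : MvPolynomial (Fin 2) R | ∀ g : MvPolynomial (Fin 2) R, L (g * f) = 0}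
      add_mem' := by
        intro a b ha hb g
        rw [mul_add, hLadd, ha, hb, add_zero]
      zero_mem' := by
        intro g
        rw [mul_zero]
        show (p : R) ^ e * coeff m0 (0 : MvPolynomial (Fin 2) R) +
          (p : R) ^ (e - 1) * coeff m1 (0 : MvPolynomial (Fin 2) R) = 0
        simp
      smul_mem' := by
        intro c f hf g
        rw [smul_eq_mul, show g * (c * f) = (g * c) * f by ring]
        exact hf (g * c) } with hK
  have hspan : Ideal.span
      ((Set.range fun n : Fin (e + 1) =>
          (p : MvPolynomial (Fin 2) R) ^ (e - (n : ℕ)) *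
            MvPolynomial.map (Int.castRingHom R) (F p n)) ∪ {X 1 ^ p ^ e}) ≤ K := by
    rw [Ideal.span_le]
    rintro s (⟨n, rfl⟩ | rfl)
    · -- generator p^{e-n} * F_n
      intro g
      beta_reduce
      have hkle : (n : ℕ) ≤ e := Nat.lt_succ_iff.mp n.isLt
      by_cases hke : (n : ℕ) = e
      · -- n = e : use F_e = x^{p^e} - p y^{p^{e-1}} + p² D
        simp only [hke]
        obtain ⟨D, hD⟩ := F_succ_eq p hp.pos (e - 1)
        rw [show e - 1 + 1 = e by omega] at hD
        have hmap : MvPolynomial.map (Int.castRingHom R) (F p e) =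
            X 0 ^ p ^ e - ((p : ℕ) : MvPolynomial (Fin 2) R) * X 1 ^ p ^ (e - 1) +
              ((p : ℕ) : MvPolynomial (Fin 2) R) ^ 2 *
                MvPolynomial.map (Int.castRingHom R) D := by
          rw [hD]
          simp only [map_add, map_sub, map_mul, map_pow, MvPolynomial.map_X, map_natCast]
        rw [Nat.sub_self, pow_zero, one_mul, hmap]
        have hre : g * (X 0 ^ p ^ e - ((p : ℕ) : MvPolynomial (Fin 2) R) * X 1 ^ p ^ (e - 1) +
              ((p : ℕ) : MvPolynomial (Fin 2) R) ^ 2 *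
                MvPolynomial.map (Int.castRingHom R) D) =
            g * X 0 ^ p ^ e + C (-((p : ℕ) : R)) * (g * X 1 ^ p ^ (e - 1)) +
              C (((p : ℕ) : R) ^ 2) * (g * MvPolynomial.map (Int.castRingHom R) D) := by
          rw [map_neg, map_pow, ← hCp]; ring
        rw [hre, hLadd, hLadd, hLCmul, hLCmul, hp2L]
        simp only [hLdef]
        rw [hcXm0 g, hcXm1 g _ (le_of_lt hpee), hcYm0 g _ hpe1, hcYm1 g]
        have hps : (p : R) * (p : R) ^ (e - 1) = (p : R) ^ e := by
          rw [← pow_succ']; congr 1; omega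
        linear_combination (-(coeff (Finsupp.single 0 (p ^ (e - 1) - 1)) g)) * hps
      · by_cases hke1 : (n : ℕ) + 1 = e
        · -- n = e - 1 : use F_n = x^{p^n} + p C₀
          obtain ⟨C0, hC0⟩ := F_eq p hp.pos (n : ℕ)
          have hmap : MvPolynomial.map (Int.castRingHom R) (F p (n : ℕ)) =
              X 0 ^ p ^ (n : ℕ) +
                ((p : ℕ) : MvPolynomial (Fin 2) R) *
                  MvPolynomial.map (Int.castRingHom R) C0 := by
            rw [hC0]
            simp only [map_add, map_mul, map_pow, MvPolynomial.map_X, map_natCast]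
          rw [show e - (n : ℕ) = 1 by omega, pow_one, hmap]
          have hre : g * (((p : ℕ) : MvPolynomial (Fin 2) R) * (X 0 ^ p ^ (n : ℕ) +
                ((p : ℕ) : MvPolynomial (Fin 2) R) *
                  MvPolynomial.map (Int.castRingHom R) C0)) =
              C ((p : ℕ) : R) * (g * X 0 ^ p ^ (n : ℕ)) +
                C (((p : ℕ) : R) ^ 2) *
                  (g * MvPolynomial.map (Int.castRingHom R) C0) := by
            rw [map_pow, ← hCp]; ring
          rw [hre, hLadd, hLCmul, hLCmul, hp2L, add_zero]
          have hc1 : coeff m1 (g * X 0 ^ p ^ (n : ℕ)) = 0 := by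
            apply hcXm1
            rw [show (n : ℕ) = e - 1 by omega]
          simp only [hLdef] at hc1 ⊢
          rw [hc1, mul_zero, add_zero, ← mul_assoc,
            show (p : R) * (p : R) ^ e = (p : R) ^ (e + 1) from (pow_succ' _ _).symm,
            hzero, zero_mul]
        · -- n ≤ e - 2 : everything dies for valuation reasons
          have h2 : (n : ℕ) + 2 ≤ e := by omega
          rw [hCp, ← map_pow]
          rw [show g * (C (((p : ℕ) : R) ^ (e - (n : ℕ))) *
                MvPolynomial.map (Int.castRingHom R) (F p (n : ℕ))) =
              C (((p : ℕ) : R) ^ (e - (n : ℕ))) *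
                (g * MvPolynomial.map (Int.castRingHom R) (F p (n : ℕ))) from by ring]
          rw [hLCmul]
          obtain ⟨a, ha⟩ := hLfac (g * MvPolynomial.map (Int.castRingHom R) (F p (n : ℕ)))
          rw [ha, ← mul_assoc, ← pow_add, hbig _ (by omega), zero_mul]
    · -- generator y^{p^e}
      intro g
      simp only [hLdef]
      rw [hcYm0 g _ (by omega), hcYm1' g _ (by omega)]
      ring
  -- conclusion
  intro hmem
  rw [hI] at hmem
  have hxK : (X 0 : MvPolynomial (Fin 2) R) ^ (p ^ e + p ^ (e - 1) - 1) ∈ K := hspan hmem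
  have hx := hxK 1
  rw [one_mul] at hx
  rw [show p ^ e + p ^ (e - 1) - 1 = p ^ (e - 1) - 1 + p ^ e by omega] at hx
  rw [X_pow_eq_monomial] at hx
  simp only [hLdef] at hx
  rw [coeff_monomial, coeff_monomial, if_pos hm0.symm, if_neg, mul_one, mul_zero,
    add_zero] at hx
  · have hx' : ((p ^ e : ℕ) : R) = 0 := by push_cast; exact hx
    rw [ZMod.natCast_eq_zero_iff] at hx'
    have hle := Nat.le_of_dvd (by positivity) hx'
    have hlt : p ^ e < p ^ (e + 1) := Nat.pow_lt_pow_right hp1 (by omega)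
    omega
  · intro hcon
    have h1 : (Finsupp.single 0 (p ^ (e - 1) - 1 + p ^ e) : Fin 2 →₀ ℕ) 1 = m1 1 := by
      rw [hcon]
    rw [hm1at1, Finsupp.single_eq_of_ne (by decide)] at h1
    omega
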